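/- arXiv:1501.04506 — 4 statements merged into one kernel-verified Lean document; each statement's English description precedes it below -/
import Mathlib

section
/- Let p be a prime and let Γ be a nontrivial linearly ordered abelian group. If Γ is p-antiregular, then the subgroup pΓ = {p·γ : γ ∈ Γ} has infinite index in Γ. -/
/-- A subgroup `Δ` of a linearly ordered abelian group `Γ` is convex if whenever
`0 ≤ β ≤ δ` and `δ ∈ Δ`, then `β ∈ Δ`. -/
def IsConvexAddSubgroup {Γ : Type*} [AddCommGroup Γ] [LinearOrder Γ] [IsOrderedAddMonoid Γ] (Δ : AddSubgroup Γ) : Prop :=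
  ∀ β δ : Γ, 0 ≤ β → β ≤ δ → δ ∈ Δ → β ∈ Δ

/-- The quotient `Γ/Δ` of `Γ` by the (convex) subgroup `Δ` is `p`-divisible:
for every `γ ∈ Γ` there are `ε ∈ Γ` and `δ ∈ Δ` with `γ = p • ε + δ`. -/
def QuotPDivisible {Γ : Type*} [AddCommGroup Γ] [LinearOrder Γ] [IsOrderedAddMonoid Γ] (p : ℕ) (Δ : AddSubgroup Γ) :
    Prop :=
  ∀ γ : Γ, ∃ ε : Γ, ∃ δ ∈ Δ, γ = p • ε + δ

/-- The quotient `Γ/Δ` has rank `1`: `Δ ≠ Γ` and there is no convex subgroup strictly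
between `Δ` and `Γ`. -/
def QuotRankOne {Γ : Type*} [AddCommGroup Γ] [LinearOrder Γ] [IsOrderedAddMonoid Γ] (Δ : AddSubgroup Γ) : Prop :=
  Δ ≠ ⊤ ∧ ∀ Δ' : AddSubgroup Γ, IsConvexAddSubgroup Δ' → Δ < Δ' → Δ' = ⊤

/-- A linearly ordered abelian group `Γ` is `p`-antiregular if `Γ/Δ` is not `p`-divisible for
every convex subgroup `Δ ≠ Γ`, and no quotient of `Γ` by a convex subgroup has rank `1`. -/
def IsPAntiregular (p : ℕ) (Γ : Type*) [AddCommGroup Γ] [LinearOrder Γ] [IsOrderedAddMonoid Γ] : Prop :=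
  (∀ Δ : AddSubgroup Γ, IsConvexAddSubgroup Δ → Δ ≠ ⊤ → ¬ QuotPDivisible p Δ) ∧
  (∀ Δ : AddSubgroup Γ, IsConvexAddSubgroup Δ → ¬ QuotRankOne Δ)

/-!
Convex subgroups form a chain, so the union of all proper convex subgroups is again a convex
subgroup. It is all of `Γ`, since otherwise `Γ` modulo it would have rank one. Hence every
element, and by the chain property every finite set, lies in one proper convex subgroup `Δ`.
If `[Γ : pΓ]` were finite, `Δ` could be taken to contain a full set of coset representatives
of `pΓ`, and then `Γ = pΓ + Δ`, i.e. `Γ/Δ` would be `p`-divisible.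
-/

section

variable {Γ : Type*} [AddCommGroup Γ] [LinearOrder Γ] [IsOrderedAddMonoid Γ]

namespace IsConvexAddSubgroup

theorem bot : IsConvexAddSubgroup (⊥ : AddSubgroup Γ) := by
  intro β δ hβ hβδ hδ
  rw [AddSubgroup.mem_bot] at hδ ⊢
  exact le_antisymm (hδ ▸ hβδ) hβ

theorem le_total {Δ₁ Δ₂ : AddSubgroup Γ} (h₁ : IsConvexAddSubgroup Δ₁)
    (h₂ : IsConvexAddSubgroup Δ₂) : Δ₁ ≤ Δ₂ ∨ Δ₂ ≤ Δ₁ := by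
  by_contra! h
  obtain ⟨x, hx₁, hx₂⟩ := SetLike.not_le_iff_exists.mp h.1
  obtain ⟨y, hy₂, hy₁⟩ := SetLike.not_le_iff_exists.mp h.2
  rcases _root_.le_total |x| |y| with hxy | hyx
  · exact hx₂ (abs_mem_iff.mp (h₂ _ _ (abs_nonneg x) hxy (abs_mem_iff.mpr hy₂)))
  · exact hy₁ (abs_mem_iff.mp (h₁ _ _ (abs_nonneg y) hyx (abs_mem_iff.mpr hx₁)))

end IsConvexAddSubgroup

theorem quotPDivisible_of_subset_range_nsmul {p : ℕ} {H Δ : AddSubgroup Γ}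
    (hH : ∀ x ∈ H, ∃ γ : Γ, x = p • γ) {s : Set Γ}
    (hs : ∀ q : Γ ⧸ H, ∃ x ∈ s, (x : Γ ⧸ H) = q) (hsΔ : s ⊆ Δ) : QuotPDivisible p Δ := by
  intro γ
  obtain ⟨x, hxs, hx⟩ := hs γ
  obtain ⟨ε, hε⟩ := hH _ (QuotientAddGroup.eq_iff_sub_mem.mp hx.symm)
  exact ⟨ε, x, hsΔ hxs, sub_eq_iff_eq_add.mp hε⟩

variable [Nontrivial Γ]

variable (Γ) in
def properConvexUnion : AddSubgroup Γ where
  carrier := {x | ∃ Δ : AddSubgroup Γ, IsConvexAddSubgroup Δ ∧ Δ ≠ ⊤ ∧ x ∈ Δ}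
  zero_mem' := ⟨⊥, .bot, bot_ne_top, zero_mem _⟩
  add_mem' := by
    rintro x y ⟨Δ₁, hc₁, hne₁, hx⟩ ⟨Δ₂, hc₂, hne₂, hy⟩
    rcases hc₁.le_total hc₂ with h | h
    · exact ⟨Δ₂, hc₂, hne₂, add_mem (h hx) hy⟩
    · exact ⟨Δ₁, hc₁, hne₁, add_mem hx (h hy)⟩
  neg_mem' := by
    rintro x ⟨Δ, hc, hne, hx⟩
    exact ⟨Δ, hc, hne, neg_mem hx⟩

theorem isConvexAddSubgroup_properConvexUnion : IsConvexAddSubgroup (properConvexUnion Γ) := by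
  rintro β δ hβ hβδ ⟨Δ, hc, hne, hδ⟩
  exact ⟨Δ, hc, hne, hc β δ hβ hβδ hδ⟩

theorem properConvexUnion_eq_top
    (h : ∀ Δ : AddSubgroup Γ, IsConvexAddSubgroup Δ → ¬ QuotRankOne Δ) :
    properConvexUnion Γ = ⊤ := by
  by_contra hne
  have : ¬ QuotRankOne (properConvexUnion Γ) := h _ isConvexAddSubgroup_properConvexUnion
  simp only [QuotRankOne, not_and, not_forall] at this
  obtain ⟨Δ, hc, hlt, hΔ⟩ := this hne
  exact hlt.not_ge fun x hx ↦ ⟨Δ, hc, hΔ, hx⟩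

theorem exists_convex_ne_top_subset
    (h : ∀ Δ : AddSubgroup Γ, IsConvexAddSubgroup Δ → ¬ QuotRankOne Δ) (s : Finset Γ) :
    ∃ Δ : AddSubgroup Γ, IsConvexAddSubgroup Δ ∧ Δ ≠ ⊤ ∧ ↑s ⊆ (Δ : Set Γ) := by
  classical
  induction s using Finset.induction_on with
  | empty => exact ⟨⊥, .bot, bot_ne_top, by simp⟩
  | insert a s _ ih =>
    obtain ⟨Δ, hc, hne, hs⟩ := ih
    obtain ⟨Δa, hca, hnea, ha⟩ : a ∈ properConvexUnion Γ := by
      rw [properConvexUnion_eq_top h]; trivial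
    rw [Finset.coe_insert]
    rcases hc.le_total hca with hle | hle
    · exact ⟨Δa, hca, hnea, Set.insert_subset ha (hs.trans hle)⟩
    · exact ⟨Δ, hc, hne, Set.insert_subset (hle ha) hs⟩

end

theorem infinite_index_of_pAntiregular_general (p : ℕ)
    (Γ : Type*) [AddCommGroup Γ] [LinearOrder Γ] [IsOrderedAddMonoid Γ] [Nontrivial Γ]
    (hanti : IsPAntiregular p Γ)
    (H : AddSubgroup Γ) (hH : ∀ x : Γ, x ∈ H ↔ ∃ γ : Γ, x = p • γ) :
    Infinite (Γ ⧸ H) := by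
  classical
  by_contra hfin
  have : Fintype (Γ ⧸ H) := @Fintype.ofFinite _ (not_infinite_iff_finite.mp hfin)
  let reps : Finset Γ := Finset.univ.image fun q : Γ ⧸ H ↦ q.out
  obtain ⟨Δ, hc, hne, hreps⟩ := exists_convex_ne_top_subset hanti.2 reps
  refine hanti.1 Δ hc hne (quotPDivisible_of_subset_range_nsmul (fun x ↦ (hH x).mp) ?_ hreps)
  exact fun q ↦ ⟨q.out, by simp [reps], QuotientAddGroup.out_eq' q⟩

/-- Lemma: antiregular groups have `[Γ : pΓ] = ∞`.
Let `p` be a prime and `Γ` a nontrivial linearly ordered abelian group. If `Γ` is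
`p`-antiregular, then the subgroup `pΓ = {p • γ : γ ∈ Γ}` has infinite index in `Γ`. -/
theorem infinite_index_of_pAntiregular (p : ℕ) (hp : p.Prime)
    (Γ : Type*) [AddCommGroup Γ] [LinearOrder Γ] [IsOrderedAddMonoid Γ] [Nontrivial Γ]
    (hanti : IsPAntiregular p Γ)
    (H : AddSubgroup Γ) (hH : ∀ x : Γ, x ∈ H ↔ ∃ γ : Γ, x = p • γ) :
    Infinite (Γ ⧸ H) :=
  infinite_index_of_pAntiregular_general p Γ hanti H hH
end

section
/- Let Γ be a linearly ordered abelian group and p a prime with Γ ≠ pΓ. Assume that for every convex subgroup Δ of Γ for which Γ/Δ is p-regular (i.e. Γ/Δ' is p-divisible for every convex subgroup Δ' with Δ ⊊ Δ'), the quotient Γ/Δ is in fact p-divisible. Let Δ₀ be the intersection of all convex subgroups Δ of Γ with Γ/Δ p-divisible. Then for every γ ∈ Γ: γ ∈ Δ₀ if and only if there exists ε ∈ Γ such that for all α ∈ Γ with |α| < |γ| one has ε − α ∉ pΓ. (Here |γ| = max{γ, −γ}.) -/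
/-!
If `γ` lies in every convex `Δ` with `Γ/Δ` `p`-divisible and `γ ≠ 0`, consider the largest convex
subgroup not containing `γ`: the elements that are infinitesimal compared to `γ`, i.e. whose
archimedean class is strictly above that of `γ`. Its quotient is not `p`-divisible, so by the
regularity hypothesis neither is the quotient by some strictly larger convex subgroup `Δ`, which
must contain `γ`. A witness `ε` of non-divisibility modulo `Δ` works, since every `α` with
`|α| < |γ|` lies in `Δ`.

Conversely, if `Γ/Δ` is `p`-divisible and `γ ∉ Δ`, write `ε = pη + δ` with `δ ∈ Δ`; convexity
forces `|δ| < |γ|`, while `ε - δ ∈ pΓ`.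
-/

section

open ArchimedeanClass

variable {Γ : Type*} [AddCommGroup Γ] [LinearOrder Γ] [IsOrderedAddMonoid Γ] {Δ : AddSubgroup Γ}

namespace IsConvexAddSubgroup

theorem mem_of_abs_le (hΔ : IsConvexAddSubgroup Δ) {x y : Γ} (hxy : |x| ≤ |y|) (hy : y ∈ Δ) :
    x ∈ Δ :=
  abs_mem_iff.1 (hΔ _ _ (abs_nonneg x) hxy (abs_mem_iff.2 hy))

theorem mem_of_mk_le (hΔ : IsConvexAddSubgroup Δ) {x y : Γ} (hxy : mk y ≤ mk x) (hy : y ∈ Δ) :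
    x ∈ Δ := by
  obtain ⟨n, hn⟩ := mk_le_mk.1 hxy
  exact hΔ.mem_of_abs_le (hn.trans_eq (abs_nsmul n y).symm) (AddSubgroup.nsmul_mem Δ hy n)

theorem mem_of_ballAddSubgroup_lt (hΔ : IsConvexAddSubgroup Δ) {γ : Γ}
    (hlt : ballAddSubgroup (mk γ) < Δ) : γ ∈ Δ := by
  rcases eq_or_ne γ 0 with rfl | hγ
  · exact zero_mem Δ
  obtain ⟨x, hxΔ, hx⟩ := SetLike.exists_of_lt hlt
  rw [mem_ballAddSubgroup_iff (mk_eq_top_iff.not.2 hγ), not_lt] at hx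
  exact hΔ.mem_of_mk_le hx hxΔ

theorem exists_sub_ne_nsmul_of_not_quotPDivisible {p : ℕ} (hΔ : IsConvexAddSubgroup Δ)
    (hdiv : ¬ QuotPDivisible p Δ) {γ : Γ} (hγ : γ ∈ Δ) :
    ∃ ε : Γ, ∀ α : Γ, |α| < |γ| → ∀ y : Γ, ε - α ≠ p • y := by
  simp only [QuotPDivisible, not_forall, not_exists, not_and] at hdiv
  obtain ⟨ε, hε⟩ := hdiv
  refine ⟨ε, fun α hα y hy => hε y α (hΔ.mem_of_abs_le hα.le hγ) ?_⟩
  rw [← hy, sub_add_cancel]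

theorem mem_of_forall_sub_ne_nsmul {p : ℕ} (hΔ : IsConvexAddSubgroup Δ)
    (hdiv : QuotPDivisible p Δ) {γ ε : Γ} (hε : ∀ α : Γ, |α| < |γ| → ∀ y : Γ, ε - α ≠ p • y) :
    γ ∈ Δ := by
  obtain ⟨η, δ, hδ, rfl⟩ := hdiv ε
  by_contra hγ
  have hδγ : |δ| < |γ| := lt_of_not_ge fun h => hγ (hΔ.mem_of_abs_le h hδ)
  exact hε δ hδγ η (add_sub_cancel_right _ _)

end IsConvexAddSubgroup

theorem isConvexAddSubgroup_ballAddSubgroup (c : ArchimedeanClass Γ) :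
    IsConvexAddSubgroup (ballAddSubgroup c) := by
  rcases eq_or_ne c ⊤ with rfl | hc
  · intro β δ hβ hβδ hδ
    rw [ballAddSubgroup_top, AddSubgroup.mem_bot] at hδ ⊢
    exact le_antisymm (hδ ▸ hβδ) hβ
  intro β δ hβ hβδ hδ
  rw [mem_ballAddSubgroup_iff hc] at hδ ⊢
  refine hδ.trans_le (mk_le_mk_of_abs ?_)
  rwa [abs_of_nonneg hβ, abs_of_nonneg (hβ.trans hβδ)]

theorem notMem_ballAddSubgroup_mk {γ : Γ} (hγ : γ ≠ 0) : γ ∉ ballAddSubgroup (mk γ) :=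
  (mem_ballAddSubgroup_iff (mk_eq_top_iff.not.2 hγ)).not.2 (lt_irrefl _)

end

theorem mem_inter_pDivisible_iff_general (p : ℕ)
    (Γ : Type*) [AddCommGroup Γ] [LinearOrder Γ] [IsOrderedAddMonoid Γ]
    (hreg : ∀ Δ : AddSubgroup Γ, IsConvexAddSubgroup Δ →
      (∀ Δ' : AddSubgroup Γ, IsConvexAddSubgroup Δ' → Δ < Δ' → QuotPDivisible p Δ') →
      QuotPDivisible p Δ) :
    ∀ γ : Γ,
      (∀ Δ : AddSubgroup Γ, IsConvexAddSubgroup Δ → QuotPDivisible p Δ → γ ∈ Δ) ↔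
      ∃ ε : Γ, ∀ α : Γ, |α| < |γ| → ∀ y : Γ, ε - α ≠ p • y := by
  intro γ
  refine ⟨fun hγ => ?_, fun ⟨ε, hε⟩ Δ hΔ hdiv => hΔ.mem_of_forall_sub_ne_nsmul hdiv hε⟩
  rcases eq_or_ne γ 0 with rfl | hγ0
  · exact ⟨0, fun α hα => absurd hα (by simp)⟩
  set Δγ := ArchimedeanClass.ballAddSubgroup (ArchimedeanClass.mk γ)
  have hconv : IsConvexAddSubgroup Δγ := isConvexAddSubgroup_ballAddSubgroup _
  have hnotdiv : ¬ QuotPDivisible p Δγ := fun hdiv =>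
    notMem_ballAddSubgroup_mk hγ0 (hγ _ hconv hdiv)
  obtain ⟨Δ, hΔ, hlt, hΔdiv⟩ :
      ∃ Δ : AddSubgroup Γ, IsConvexAddSubgroup Δ ∧ Δγ < Δ ∧ ¬ QuotPDivisible p Δ := by
    by_contra! h
    exact hnotdiv (hreg _ hconv h)
  exact hΔ.exists_sub_ne_nsmul_of_not_quotPDivisible hΔdiv (hΔ.mem_of_ballAddSubgroup_lt hlt)

/-- Lemma: `∅`-definability of `Δ₀`.
Let `Γ` be a linearly ordered abelian group and `p` a prime with `Γ ≠ pΓ`. Assume every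
convex subgroup `Δ` of `Γ` with `Γ/Δ` `p`-regular (i.e. `Γ/Δ'` is `p`-divisible for every
convex `Δ'` with `Δ ⊊ Δ'`) has `Γ/Δ` `p`-divisible. Let `Δ₀` be the intersection of all
convex subgroups `Δ` with `Γ/Δ` `p`-divisible. Then for every `γ ∈ Γ`: `γ ∈ Δ₀` iff there
exists `ε ∈ Γ` such that for all `α` with `|α| < |γ|` one has `ε - α ∉ pΓ`. -/
theorem mem_inter_pDivisible_iff (p : ℕ) (hp : p.Prime)
    (Γ : Type*) [AddCommGroup Γ] [LinearOrder Γ] [IsOrderedAddMonoid Γ]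
    (hnd : ∃ γ : Γ, ∀ y : Γ, γ ≠ p • y)
    (hreg : ∀ Δ : AddSubgroup Γ, IsConvexAddSubgroup Δ →
      (∀ Δ' : AddSubgroup Γ, IsConvexAddSubgroup Δ' → Δ < Δ' → QuotPDivisible p Δ') →
      QuotPDivisible p Δ) :
    ∀ γ : Γ,
      (∀ Δ : AddSubgroup Γ, IsConvexAddSubgroup Δ → QuotPDivisible p Δ → γ ∈ Δ) ↔
      ∃ ε : Γ, ∀ α : Γ, |α| < |γ| → ∀ y : Γ, ε - α ≠ p • y :=
  mem_inter_pDivisible_iff_general p Γ hreg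
end

section
/- Let Γ be a linearly ordered abelian group, p a prime, and γ ∈ Γ with γ > 0. Define Δ_γ := {δ ∈ Γ : [0, p·|δ|] ⊆ [0, p·γ] + pΓ}, where |δ| = max{δ, −δ}. Then Δ_γ is a convex subgroup of Γ containing γ, and for every convex subgroup Δ̃ of Γ with Δ_γ ⊆ Δ̃, if Δ̃/Δ_γ is p-divisible (i.e. for every δ̃ ∈ Δ̃ there are β ∈ Δ̃ and δ ∈ Δ_γ with δ̃ = pβ + δ), then Δ̃ = Δ_γ; in other words, no nontrivial convex subgroup of Γ/Δ_γ is p-divisible. -/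
/-!
Write `M = [0, p•γ] + pΓ`. Membership of `δ` in `Δ_γ` only depends on `|δ|` and is monotone in it,
which gives convexity and closure under negation. For sums, an element of `[0, p•|a + b|]` either
lies in `[0, p•|a|]` or becomes an element of `[0, p•|b|]` after subtracting `p•|a| ∈ pΓ`, and `M`
is stable under translation by `pΓ`. Since `M` is also stable under negation and `|δ| ≤ p•|δ|`,
every `δ ∈ Δ_γ` lies in `M`. Hence if `Δ̃ ⊆ pΔ̃ + Δ_γ` with `Δ̃` convex, every `β ∈ [0, p•|d|]`
with `d ∈ Δ̃` lies in `Δ̃ ⊆ pΓ + M = M`, that is `d ∈ Δ_γ`.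
-/

section DeltaGamma

variable {Γ : Type*} [AddCommGroup Γ] [LinearOrder Γ]

def iccAddMultiples (p : ℕ) (γ : Γ) : Set Γ :=
  {β | ∃ α : Γ, 0 ≤ α ∧ α ≤ p • γ ∧ ∃ ε : Γ, β = α + p • ε}

def deltaGammaSet (p : ℕ) (γ : Γ) : Set Γ :=
  {δ | ∀ β : Γ, 0 ≤ β → β ≤ p • |δ| → β ∈ iccAddMultiples p γ}

variable {p : ℕ} {γ : Γ}

theorem add_nsmul_mem_iccAddMultiples {β : Γ} (hβ : β ∈ iccAddMultiples p γ) (ε : Γ) :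
    β + p • ε ∈ iccAddMultiples p γ := by
  obtain ⟨α, hα0, hαγ, ε', rfl⟩ := hβ
  exact ⟨α, hα0, hαγ, ε' + ε, by rw [nsmul_add]; abel⟩

variable [IsOrderedAddMonoid Γ]

theorem neg_mem_iccAddMultiples {β : Γ} (hβ : β ∈ iccAddMultiples p γ) :
    -β ∈ iccAddMultiples p γ := by
  obtain ⟨α, hα0, hαγ, ε, rfl⟩ := hβ
  -- `-(α + p•ε) = (p•γ - α) + p•(-ε - γ)`, reflecting `α` inside `[0, p•γ]`
  refine ⟨p • γ - α, sub_nonneg.mpr hαγ, sub_le_self _ hα0, -ε - γ, ?_⟩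
  rw [nsmul_sub, smul_neg]
  abel

theorem mem_deltaGammaSet_of_abs_le {β δ : Γ} (h : |β| ≤ |δ|) (hδ : δ ∈ deltaGammaSet p γ) :
    β ∈ deltaGammaSet p γ :=
  fun x hx0 hx => hδ x hx0 (hx.trans (nsmul_le_nsmul_right h p))

theorem self_mem_deltaGammaSet (hγ : 0 ≤ γ) : γ ∈ deltaGammaSet p γ :=
  fun β hβ0 hβ => ⟨β, hβ0, by rwa [abs_of_nonneg hγ] at hβ, 0, by simp⟩

theorem add_mem_deltaGammaSet {a b : Γ} (ha : a ∈ deltaGammaSet p γ)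
    (hb : b ∈ deltaGammaSet p γ) : a + b ∈ deltaGammaSet p γ := by
  intro β hβ0 hβ
  rcases le_or_gt β (p • |a|) with hβa | hβa
  · exact ha β hβ0 hβa
  · have hβb : β - p • |a| ≤ p • |b| := by
      rw [sub_le_iff_le_add', ← nsmul_add]
      exact hβ.trans (nsmul_le_nsmul_right (abs_add_le a b) p)
    simpa using add_nsmul_mem_iccAddMultiples (hb _ (sub_nonneg.mpr hβa.le) hβb) |a|

def deltaGamma (p : ℕ) (hγ : 0 ≤ γ) : AddSubgroup Γ where
  carrier := deltaGammaSet p γ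
  zero_mem' := mem_deltaGammaSet_of_abs_le (by simp) (self_mem_deltaGammaSet hγ)
  add_mem' := add_mem_deltaGammaSet
  neg_mem' := mem_deltaGammaSet_of_abs_le (abs_neg _).le

theorem isConvexAddSubgroup_deltaGamma (hγ : 0 ≤ γ) :
    IsConvexAddSubgroup (deltaGamma p hγ) :=
  fun β δ hβ0 hβδ hδ =>
    mem_deltaGammaSet_of_abs_le (by rw [abs_of_nonneg hβ0]; exact hβδ.trans (le_abs_self _)) hδ

theorem mem_iccAddMultiples_of_mem_deltaGammaSet (hp : p ≠ 0) {δ : Γ}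
    (hδ : δ ∈ deltaGammaSet p γ) : δ ∈ iccAddMultiples p γ := by
  have habs : |δ| ∈ iccAddMultiples p γ := hδ _ (abs_nonneg δ) (le_self_nsmul (abs_nonneg δ) hp)
  rcases abs_choice δ with h | h
  · rwa [h] at habs
  · simpa [h] using neg_mem_iccAddMultiples habs

theorem mem_deltaGammaSet_of_isConvexAddSubgroup (hp : p ≠ 0) {Δt : AddSubgroup Γ}
    (hconv : IsConvexAddSubgroup Δt)
    (hdiv : ∀ d ∈ Δt, ∃ b : Γ, ∃ δ ∈ deltaGammaSet p γ, d = p • b + δ) {d : Γ} (hd : d ∈ Δt) :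
    d ∈ deltaGammaSet p γ := by
  intro β hβ0 hβ
  have hβmem : β ∈ Δt :=
    hconv β (p • |d|) hβ0 hβ (Δt.nsmul_mem (abs_mem_iff.mpr hd) p)
  obtain ⟨b, δ, hδ, rfl⟩ := hdiv β hβmem
  simpa [add_comm] using
    add_nsmul_mem_iccAddMultiples (mem_iccAddMultiples_of_mem_deltaGammaSet hp hδ) b

end DeltaGamma

/-- Lemma: the definable convex subgroup `Δ_γ`.
Let `Γ` be a linearly ordered abelian group, `p` a prime and `γ > 0`. Set
`Δ_γ = {δ : [0, p•|δ|] ⊆ [0, p•γ] + pΓ}`. Then `Δ_γ` is a convex subgroup of `Γ` containing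
`γ`, and every convex subgroup `Δ̃ ⊇ Δ_γ` such that `Δ̃/Δ_γ` is `p`-divisible equals `Δ_γ`;
in other words, no nontrivial convex subgroup of `Γ/Δ_γ` is `p`-divisible. -/
theorem deltaGamma_convexSubgroup (p : ℕ) (hp : p.Prime)
    (Γ : Type*) [AddCommGroup Γ] [LinearOrder Γ] [IsOrderedAddMonoid Γ] (γ : Γ) (hγ : 0 < γ) :
    ∃ Δγ : AddSubgroup Γ,
      ((Δγ : Set Γ) = {δ : Γ | ∀ β : Γ, 0 ≤ β → β ≤ p • |δ| →
        ∃ α : Γ, 0 ≤ α ∧ α ≤ p • γ ∧ ∃ ε : Γ, β = α + p • ε}) ∧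
      IsConvexAddSubgroup Δγ ∧ γ ∈ Δγ ∧
      ∀ Δt : AddSubgroup Γ, IsConvexAddSubgroup Δt → Δγ ≤ Δt →
        (∀ d ∈ Δt, ∃ b ∈ Δt, ∃ δ ∈ Δγ, d = p • b + δ) → Δt = Δγ := by
  refine ⟨deltaGamma p hγ.le, rfl, isConvexAddSubgroup_deltaGamma hγ.le,
    self_mem_deltaGammaSet hγ.le, fun Δt hconv hle hdiv => le_antisymm ?_ hle⟩
  refine fun d hd => mem_deltaGammaSet_of_isConvexAddSubgroup hp.ne_zero hconv (fun d' hd' => ?_) hd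
  obtain ⟨b, -, δ, hδ, rfl⟩ := hdiv d' hd'
  exact ⟨b, δ, hδ, rfl⟩
end

section
/- Let K be a field and O a nontrivial henselian valuation subring of K whose value group vK = K^×/O^× is not divisible (i.e. not p-divisible for some prime p). Then there exist t ∈ K and a valuation subring O' of K with O ⊆ O' and O' ≠ K (so O' is a nontrivial henselian coarsening of O) such that O' is definable using at most one parameter, namely {t}-definable. -/
/-!
If `v t < 1` and `v t` is not a `p`-th power in the value group, then for a henselian `O` the
equation `y ^ p - y = t * x ^ p` is solvable exactly when `v t * v x ^ p < 1`: for `v y ≤ 1` the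
left side has valuation at most `1`, for `v y > 1` it has valuation `v y ^ p`, and for
`v (t * x ^ p) < 1` Hensel's lemma gives a root. So the cut `S = {x | v t * v x ^ p < 1}` is
`{t}`-definable, hence so is its multiplicative stabilizer `{z | z • S ⊆ S}`. This stabilizer is a
valuation ring containing `O` and not `t⁻¹`, and it is henselian because every coarsening `O'` of
a henselian `O` is: if `c₀ = g 0 ∈ m'` and `c₁ = g' 0` is a unit, the substitution
`X = (c₀ / c₁) Y` turns `g / c₀` into a polynomial congruent to `1 + Y` modulo `m ⊇ m'`, whose
reverse is monic with the simple root `-1` modulo `m`.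
-/

open FirstOrder Language

attribute [local instance] FirstOrder.Ring.compatibleRingOfRing

universe u

section OrderedGroups

/-- A subgroup `Δ` of a (multiplicatively written) linearly ordered abelian group `G` is
convex if whenever `1 ≤ β ≤ δ` and `δ ∈ Δ`, then `β ∈ Δ`. -/
def IsConvexSubgroup {G : Type*} [CommGroup G] [LinearOrder G] [IsOrderedMonoid G] (Δ : Subgroup G) : Prop :=
  ∀ β δ : G, 1 ≤ β → β ≤ δ → δ ∈ Δ → β ∈ Δ

/-- The quotient `G/Δ` by the (convex) subgroup `Δ` is `p`-divisible (multiplicatively: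
every element is a `p`-th power modulo `Δ`). -/
def MulQuotPDivisible {G : Type*} [CommGroup G] [LinearOrder G] [IsOrderedMonoid G] (p : ℕ) (Δ : Subgroup G) :
    Prop :=
  ∀ γ : G, ∃ ε : G, ∃ δ ∈ Δ, γ = ε ^ p * δ

/-- The quotient `G/Δ` has rank `1`: `Δ ≠ G` and there is no convex subgroup strictly
between `Δ` and `G`. -/
def MulQuotRankOne {G : Type*} [CommGroup G] [LinearOrder G] [IsOrderedMonoid G] (Δ : Subgroup G) : Prop :=
  Δ ≠ ⊤ ∧ ∀ Δ' : Subgroup G, IsConvexSubgroup Δ' → Δ < Δ' → Δ' = ⊤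

/-- A (multiplicatively written) linearly ordered abelian group `G` is `p`-antiregular if
`G/Δ` is not `p`-divisible for every convex subgroup `Δ ≠ G` and no quotient of `G` by a
convex subgroup has rank `1`. -/
def MulIsPAntiregular (p : ℕ) (G : Type*) [CommGroup G] [LinearOrder G] [IsOrderedMonoid G] : Prop :=
  (∀ Δ : Subgroup G, IsConvexSubgroup Δ → Δ ≠ ⊤ → ¬ MulQuotPDivisible p Δ) ∧
  (∀ Δ : Subgroup G, IsConvexSubgroup Δ → ¬ MulQuotRankOne Δ)

end OrderedGroups

variable {K : Type u} [Field K]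

/-- The value group `vK = K^×/O^×` of a valuation subring `O` of `K`, realized as the group
of units of Mathlib's value "group with zero" of `O`; it is a linearly ordered abelian
group. -/
abbrev valueGrp (O : ValuationSubring K) : Type u := (O.ValueGroup)ˣ

/-- The value group `K^×/O^×` of `O` is `p`-divisible: every element is (multiplicatively)
a `p`-th power. -/
def ValueGroupPDivisible (O : ValuationSubring K) (p : ℕ) : Prop :=
  ∀ g : valueGrp O, ∃ h : valueGrp O, g = h ^ p

/-- The value group `K^×/O^×` of `O` is divisible: every element is an `n`-th power for
every `n ≥ 1`. -/
def ValueGroupDivisible (O : ValuationSubring K) : Prop :=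
  ∀ n : ℕ, 1 ≤ n → ∀ g : valueGrp O, ∃ h : valueGrp O, g = h ^ n

/-- A field admits a nontrivial henselian valuation, i.e. a valuation subring `O ≠ K` which
is a henselian local ring. -/
def IsHenselianField (K : Type u) [Field K] : Prop :=
  ∃ O : ValuationSubring K, O ≠ ⊤ ∧ HenselianLocalRing O

/-- `O` is the canonical henselian valuation of `K`: it is henselian, and either it has
separably closed residue field and contains every henselian valuation subring with separably
closed residue field (the coarsest such), or no henselian valuation subring of `K` has
separably closed residue field and `O` is contained in every henselian valuation subring
(the finest henselian valuation). -/
def IsCanonicalHenselian (O : ValuationSubring K) : Prop :=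
  HenselianLocalRing O ∧
    ((IsSepClosed (IsLocalRing.ResidueField O) ∧
        ∀ O' : ValuationSubring K, HenselianLocalRing O' →
          IsSepClosed (IsLocalRing.ResidueField O') → O' ≤ O) ∨
     ((∀ O' : ValuationSubring K, HenselianLocalRing O' →
          ¬ IsSepClosed (IsLocalRing.ResidueField O')) ∧
      (∀ O' : ValuationSubring K, HenselianLocalRing O' → O ≤ O')))

/-- A field `F` is `t`-henselian if some field `L`, elementarily equivalent to `F` in the
first-order language of rings, admits a nontrivial henselian valuation. -/
def IsTHenselian (F : Type u) [Field F] : Prop :=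
  ∃ (L : Type u) (_ : Field L), (F ≅[Language.ring] L) ∧ IsHenselianField L

open Polynomial IsLocalRing

namespace HenselianLocalRing

theorem of_forall_exists_isRoot {R : Type*} [CommRing R] [IsLocalRing R]
    (H : ∀ g : R[X], g.Monic → g.coeff 0 ∈ maximalIdeal R → IsUnit (g.coeff 1) →
      ∃ w ∈ maximalIdeal R, g.IsRoot w) : HenselianLocalRing R where
  is_henselian f hf a₀ h₁ h₂ := by
    obtain ⟨w, hw, hroot⟩ := H (taylor a₀ f) (by rw [Monic, leadingCoeff_taylor]; exact hf)
      (by rwa [taylor_coeff_zero]) (by rwa [taylor_coeff_one])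
    exact ⟨w + a₀, by rwa [IsRoot, ← taylor_eval], by rwa [add_sub_cancel_right]⟩

variable {R : Type*} [CommRing R] [HenselianLocalRing R]

theorem exists_pow_sub_self_eq {n : ℕ} (hn : 2 ≤ n) {a : R} (ha : a ∈ maximalIdeal R) :
    ∃ y : R, y ^ n - y = a := by
  have hmonic : (X ^ n - (X + C a)).Monic :=
    monic_X_pow_sub (by rw [degree_X_add_C]; exact_mod_cast hn)
  obtain ⟨y, hy, -⟩ := is_henselian _ hmonic 0 (by simpa [zero_pow (by omega : n ≠ 0)] using ha)
    (by simp [derivative_X_pow, zero_pow (by omega : n - 1 ≠ 0)])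
  exact ⟨y, by simpa [sub_eq_zero, sub_add_eq_sub_sub] using hy⟩

theorem exists_isRoot_of_map_residue_eq_X_pow_mul_X_add_one {f : R[X]} (hf : f.Monic) {k : ℕ}
    (hred : f.map (residue R) = X ^ k * (X + 1)) :
    ∃ a : R, f.IsRoot a ∧ residue R a = -1 := by
  have hensel := ((HenselianLocalRing.TFAE R).out 0 1).mp ‹HenselianLocalRing R›
  refine hensel f hf (-1) ?_ ?_
  · rw [aeval_def, eval₂_eq_eval_map, ResidueField.algebraMap_eq, hred]
    simp
  · rw [aeval_def, eval₂_eq_eval_map, ResidueField.algebraMap_eq, ← derivative_map, hred]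
    simp

theorem exists_isRoot_of_map_residue_eq_X_add_one {f : R[X]} (h0 : f.coeff 0 = 1)
    (hred : f.map (residue R) = X + 1) : ∃ a : R, f.IsRoot a ∧ residue R a = -1 := by
  have hdeg : 1 ≤ f.natDegree := by
    have h1 : residue R (f.coeff 1) = 1 := by simpa [coeff_one] using congrArg (coeff · 1) hred
    exact le_natDegree_of_ne_zero fun h => by simp [h] at h1
  have hmonic : f.reverse.Monic := by
    rw [Monic, reverse_leadingCoeff, trailingCoeff,
      natTrailingDegree_eq_zero.mpr (Or.inr (by simp [h0])), h0]
  have hred' : f.reverse.map (residue R) = X ^ (f.natDegree - 1) * (X + 1) := by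
    have hX : reflect f.natDegree (X : (ResidueField R)[X]) = X ^ (f.natDegree - 1) := by
      simpa [revAt_le hdeg] using reflect_monomial (R := ResidueField R) f.natDegree 1
    rw [Polynomial.reverse, ← reflect_map, hred, reflect_add, reflect_one, hX, mul_add, ← pow_succ,
      Nat.sub_add_cancel hdeg, mul_one, add_comm]
  obtain ⟨b, hb, hb1⟩ := exists_isRoot_of_map_residue_eq_X_pow_mul_X_add_one hmonic hred'
  have hbu : IsUnit b := by
    by_contra h
    rw [← mem_nonunits_iff, ← mem_maximalIdeal, ← residue_eq_zero_iff, hb1] at h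
    exact one_ne_zero (neg_eq_zero.mp h)
  let _ : Invertible (↑hbu.unit⁻¹ : R) := ⟨b, by simp, by simp⟩
  refine ⟨↑hbu.unit⁻¹, (eval₂_reverse_eq_zero_iff (RingHom.id R) _ f).mp hb, ?_⟩
  have hinv : residue R ↑hbu.unit⁻¹ * residue R b = 1 := by
    rw [← map_mul, IsUnit.val_inv_mul, map_one]
  rw [hb1] at hinv
  linear_combination -hinv

end HenselianLocalRing

theorem Set.definableFun_freeCommRing_lift {R α : Type*} [CommRing R] (A : Set R)
    (q : FreeCommRing α) : A.DefinableFun Language.ring fun w : α → R => FreeCommRing.lift w q := by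
  have := (FirstOrder.Ring.termOfFreeCommRing q).definableFun_realize (M := R)
  simp only [FirstOrder.Ring.realize_termOfFreeCommRing] at this
  exact this.of_empty

theorem Set.Definable₁.setOf_forall_mul_mem {R : Type*} [CommRing R] {A S : Set R}
    (hS : A.Definable₁ Language.ring S) :
    A.Definable₁ Language.ring {z | ∀ x ∈ S, z * x ∈ S} := by
  let F : (Fin 1 ⊕ Fin 1 → R) → Fin 1 → R := fun w _ => w (Sum.inl 0) * w (Sum.inr 0)
  have hF : A.DefinableMap Language.ring F := fun _ => by
    simpa using A.definableFun_freeCommRing_lift (.of (Sum.inl 0 : Fin 1 ⊕ Fin 1) * .of (Sum.inr 0))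
  have hx := hS.preimage_comp fun _ : Fin 1 => (Sum.inr 0 : Fin 1 ⊕ Fin 1)
  unfold Set.Definable₁
  convert (hx.himp (hS.preimage_map hF)).forall_of_finite (β := Fin 1) using 2
  ext v
  simp only [Set.mem_ofPred_eq, Set.preimage_ofPred_eq, Function.comp_apply, Set.mem_himp_iff,
    Sum.elim_inr, Sum.elim_inl, F]
  exact ⟨fun h u => h (u 0), fun h x => h fun _ => x⟩

theorem definable₁_setOf_exists_pow_sub_self_eq_mul_pow (p : ℕ) (t : K) :
    ({t} : Set K).Definable₁ Language.ring {x | ∃ y, y ^ p - y = t * x ^ p} := by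
  have hlhs := Set.definableFun_freeCommRing_lift ({t} : Set K)
    (.of (Sum.inr 0 : Fin 1 ⊕ Fin 1) ^ p - .of (Sum.inr 0))
  have hrhs : ({t} : Set K).DefinableFun Language.ring
      fun w : Fin 1 ⊕ Fin 1 → K => t * w (Sum.inl 0) ^ p := by
    have hG : ({t} : Set K).DefinableMap Language.ring
        fun w : Fin 1 ⊕ Fin 1 → K => ![t, w (Sum.inl 0)] := by
      intro i
      fin_cases i
      · exact Language.definableFun_const _ _ rfl
      · exact Set.DefinableFun.proj Language.ring
    have hmul := Set.definableFun_freeCommRing_lift ({t} : Set K) (.of (0 : Fin 2) * .of 1 ^ p)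
    simp only [map_mul, map_pow, FreeCommRing.lift_of] at hmul
    simpa using Set.DefinableFun.comp hG hmul
  unfold Set.Definable₁
  convert (hlhs.ofPred_eq hrhs).exists_of_finite (β := Fin 1) using 2
  ext v
  simp only [Set.mem_ofPred_eq, map_sub, map_pow, FreeCommRing.lift_of, Sum.elim_inr,
    Sum.elim_inl]
  exact ⟨fun ⟨y, hy⟩ => ⟨fun _ => y, hy⟩, fun ⟨u, hu⟩ => ⟨u 0, hu⟩⟩

namespace Valuation

variable {Γ₀ : Type*} [LinearOrderedCommGroupWithZero Γ₀] (v : Valuation K Γ₀) {p : ℕ} {y : K}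

theorem map_pow_sub_self_le_one (hy : v y ≤ 1) : v (y ^ p - y) ≤ 1 :=
  (v.map_sub _ _).trans (max_le (by rw [map_pow]; exact pow_le_one' hy p) hy)

theorem map_pow_sub_self_of_one_lt (hp : 2 ≤ p) (hy : 1 < v y) : v (y ^ p - y) = v y ^ p := by
  rw [v.map_sub_eq_of_lt_left (by rw [map_pow]; exact lt_self_pow₀ hy (by omega)), map_pow]

end Valuation

namespace ValuationSubring

variable (O : ValuationSubring K)

theorem exists_eval_eq_zero_of_valuation_coeff_lt_one [HenselianLocalRing O] {f : K[X]}
    (h0 : f.coeff 0 = 1) (h1 : f.coeff 1 = 1) (hlt : ∀ i, 2 ≤ i → O.valuation (f.coeff i) < 1) :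
    ∃ y : K, f.eval y = 0 ∧ O.valuation (y + 1) < 1 := by
  have hmem : ∀ i, f.coeff i ∈ O
    | 0 => h0 ▸ O.one_mem
    | 1 => h1 ▸ O.one_mem
    | i + 2 => O.mem_of_valuation_le_one _ (hlt _ (by omega)).le
  obtain ⟨g, rfl⟩ := (mem_lifts (f := algebraMap O K) _).mp
    ((lifts_iff_coeff_lifts _).mpr fun i => ⟨⟨_, hmem i⟩, rfl⟩)
  simp only [coeff_map, algebraMap_apply] at h0 h1 hlt
  have hg0 : g.coeff 0 = 1 := Subtype.ext h0
  have hg1 : g.coeff 1 = 1 := Subtype.ext h1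
  have hred : g.map (residue O) = X + 1 := by
    ext (_ | _ | i)
    · simp [hg0]
    · simp [hg1, coeff_one]
    · rw [coeff_map, (residue_eq_zero_iff _).mpr ((valuation_lt_one_iff O _).mpr (hlt _ (by omega)))]
      simp [coeff_X, coeff_one]
  obtain ⟨y, hy, hy1⟩ := HenselianLocalRing.exists_isRoot_of_map_residue_eq_X_add_one hg0 hred
  refine ⟨y, ?_, ?_⟩
  · rw [eval_map, show (y : K) = algebraMap O K y from rfl, eval₂_at_apply, hy.eq_zero, map_zero]
  · have : residue O (y + 1) = 0 := by rw [map_add, hy1, map_one, neg_add_cancel]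
    exact (valuation_lt_one_iff O _).mp ((residue_eq_zero_iff _).mp this)

variable {O}

theorem exists_isRoot_mem_maximalIdeal_of_le {O' : ValuationSubring K} (hle : O ≤ O')
    [HenselianLocalRing O] {g : O'[X]} (hg0 : g.coeff 0 ∈ maximalIdeal O')
    (hg1 : IsUnit (g.coeff 1)) : ∃ w ∈ maximalIdeal O', g.IsRoot w := by
  set c := g.coeff 0
  rcases eq_or_ne c 0 with hc | hc
  · exact ⟨0, (maximalIdeal _).zero_mem, by rwa [IsRoot, ← coeff_zero_eq_eval_zero]⟩
  set u : O' := ↑hg1.unit⁻¹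
  have hu : g.coeff 1 * u = 1 := hg1.mul_val_inv
  have hcK : (c : K) ≠ 0 := by exact_mod_cast hc
  -- `f Y = g (c u Y) / c = 1 + Y + ∑ cᵢ cⁱ⁻¹ uⁱ Yⁱ`, whose higher coefficients lie in `m' ⊆ m`.
  set f : K[X] := C (c : K)⁻¹ * (g.map (algebraMap O' K)).comp (C ((c * u : O') : K) * X)
  have hf : ∀ i, f.coeff (i + 1) = ((g.coeff (i + 1) * c ^ i * u ^ (i + 1) : O') : K) := by
    intro i
    simp only [f, coeff_C_mul, comp_C_mul_X_coeff, coeff_map, algebraMap_apply]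
    push_cast
    field_simp
    ring
  have hf0 : f.coeff 0 = 1 := by
    simp only [f, coeff_C_mul, comp_C_mul_X_coeff, coeff_map, algebraMap_apply, pow_zero, mul_one]
    exact inv_mul_cancel₀ hcK
  have hf1 : f.coeff 1 = 1 := by simpa [hu] using hf 0
  have hflt : ∀ i, 2 ≤ i → O.valuation (f.coeff i) < 1 := by
    intro i hi
    obtain ⟨j, rfl⟩ := Nat.exists_eq_add_of_le' hi
    rw [hf]
    refine nonunits_le_nonunits.mpr hle (coe_mem_nonunits_iff.mpr ?_)
    exact Ideal.mul_mem_right _ _ (Ideal.mul_mem_left _ _ (Ideal.pow_mem_of_mem _ hg0 _ (by omega)))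
  obtain ⟨y, hy, hy1⟩ := O.exists_eval_eq_zero_of_valuation_coeff_lt_one hf0 hf1 hflt
  have hyO : y ∈ O' := by
    refine hle (add_sub_cancel_right y 1 ▸ sub_mem ?_ O.one_mem)
    exact O.mem_of_valuation_le_one _ hy1.le
  refine ⟨c * u * ⟨y, hyO⟩, Ideal.mul_mem_right _ _ (Ideal.mul_mem_right _ _ hg0), ?_⟩
  have hroot := congrArg ((c : K) * ·) hy
  simp only [f, eval_mul, eval_C, eval_comp, eval_X, mul_inv_cancel_left₀ hcK, mul_zero] at hroot
  rw [eval_map, show ((c * u : O') : K) * y = algebraMap O' K (c * u * ⟨y, hyO⟩) from rfl,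
    eval₂_at_apply] at hroot
  exact Subtype.ext hroot

theorem henselianLocalRing_of_le {O' : ValuationSubring K} (hle : O ≤ O') [HenselianLocalRing O] :
    HenselianLocalRing O' :=
  .of_forall_exists_isRoot fun _ _ hg0 hg1 => exists_isRoot_mem_maximalIdeal_of_le hle hg0 hg1

variable (O)

theorem exists_pow_sub_self_eq_mul_pow_iff [HenselianLocalRing O] {p : ℕ} (hp : 2 ≤ p) {t : K}
    (ht : ∀ s, O.valuation t ≠ O.valuation s ^ p) (x : K) :
    (∃ y, y ^ p - y = t * x ^ p) ↔ O.valuation t * O.valuation x ^ p < 1 := by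
  constructor
  · rintro ⟨y, hy⟩
    by_contra! hge
    have hx : x ≠ 0 := by
      rintro rfl
      simp [zero_pow (by omega : p ≠ 0)] at hge
    have hpow : ∀ z, O.valuation t * O.valuation x ^ p ≠ O.valuation z ^ p := fun z hz =>
      ht (z * x⁻¹) (by
        rw [map_mul, map_inv₀, mul_pow, inv_pow, ← hz,
          mul_inv_cancel_right₀ (pow_ne_zero _ ((Valuation.ne_zero_iff _).mpr hx))])
    have hval : O.valuation (y ^ p - y) = O.valuation t * O.valuation x ^ p := by
      rw [hy, map_mul, map_pow]
    rcases le_or_gt (O.valuation y) 1 with hy1 | hy1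
    · exact hpow 1 (by
        rw [map_one, one_pow]
        exact le_antisymm (hval ▸ O.valuation.map_pow_sub_self_le_one hy1) hge)
    · exact hpow y (hval ▸ O.valuation.map_pow_sub_self_of_one_lt hp hy1)
  · intro h
    rw [← map_pow, ← map_mul] at h
    obtain ⟨y, hy⟩ := HenselianLocalRing.exists_pow_sub_self_eq hp
      ((valuation_lt_one_iff O ⟨_, O.mem_of_valuation_le_one _ h.le⟩).mpr h)
    exact ⟨y, congrArg Subtype.val hy⟩

theorem exists_valuation_lt_one_forall_ne_pow {p : ℕ} (hp : p ≠ 0)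
    (h : ¬ ValueGroupPDivisible O p) :
    ∃ t : K, O.valuation t < 1 ∧ ∀ s, O.valuation t ≠ O.valuation s ^ p := by
  simp only [ValueGroupPDivisible, not_forall, not_exists] at h
  obtain ⟨g, hg⟩ := h
  obtain ⟨t, ht⟩ := O.valuation_surjective g
  have hne : ∀ s, O.valuation t ≠ O.valuation s ^ p := by
    intro s hs
    have hs0 : O.valuation s ≠ 0 := fun h0 => g.ne_zero (by rw [← ht, hs, h0, zero_pow hp])
    exact hg (Units.mk0 _ hs0) (Units.ext (by simp [← ht, hs]))
  rcases lt_trichotomy (O.valuation t) 1 with hlt | heq | hgt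
  · exact ⟨t, hlt, hne⟩
  · exact (hne 1 (by rw [heq, map_one, one_pow])).elim
  · refine ⟨t⁻¹, by rwa [map_inv₀, inv_lt_one₀ (zero_lt_one.trans hgt)], fun s hs => hne s⁻¹ ?_⟩
    rw [map_inv₀, inv_pow, ← hs, map_inv₀, inv_inv]

section mulStabilizer

variable {O} {S : Set K}

theorem mul_mem_of_mem (hS : ∀ a b, O.valuation a ≤ O.valuation b → b ∈ S → a ∈ S) {z x : K}
    (hz : z ∈ O) (hx : x ∈ S) : z * x ∈ S :=
  hS _ _ (by rw [map_mul]; exact mul_le_of_le_one_left' ((valuation_le_one_iff O z).mpr hz)) hx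

variable (hS : ∀ a b, O.valuation a ≤ O.valuation b → b ∈ S → a ∈ S)

def mulStabilizer : ValuationSubring K where
  carrier := {z | ∀ x ∈ S, z * x ∈ S}
  mul_mem' {z w} hz hw x hx := mul_assoc z w x ▸ hz _ (hw x hx)
  one_mem' x hx := (one_mul x).symm ▸ hx
  add_mem' {z w} hz hw x hx := by
    rcases le_max_iff.mp (add_mul z w x ▸ O.valuation.map_add (z * x) (w * x)) with h | h
    exacts [hS _ _ h (hz x hx), hS _ _ h (hw x hx)]
  zero_mem' x hx := hS _ _ (by simp) hx
  neg_mem' {z} hz x hx := hS _ _ (by rw [neg_mul, Valuation.map_neg]) (hz x hx)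
  mem_or_inv_mem' z :=
    (O.mem_or_inv_mem z).imp (fun h _ => mul_mem_of_mem hS h) (fun h _ => mul_mem_of_mem hS h)

theorem le_mulStabilizer : O ≤ mulStabilizer hS := fun _ hz _ => mul_mem_of_mem hS hz

theorem mulStabilizer_ne_top {x y : K} (hx : x ∈ S) (hx0 : x ≠ 0) (hy : y ∉ S) :
    mulStabilizer hS ≠ ⊤ := fun h =>
  hy (by simpa [hx0] using (h ▸ mem_top (y * x⁻¹) : y * x⁻¹ ∈ mulStabilizer hS) x hx)

end mulStabilizer

end ValuationSubring

theorem exists_oneParamDefinable_coarsening_of_not_divisible_general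
    (O : ValuationSubring K) (hhens : HenselianLocalRing O)
    (hndiv : ∃ p : ℕ, p.Prime ∧ ¬ ValueGroupPDivisible O p) :
    ∃ (t : K) (O' : ValuationSubring K), O ≤ O' ∧ O' ≠ ⊤ ∧ HenselianLocalRing O' ∧
      ({t} : Set K).Definable₁ Language.ring {x : K | x ∈ O'} := by
  obtain ⟨p, hp, hnd⟩ := hndiv
  obtain ⟨t, ht1, htp⟩ := O.exists_valuation_lt_one_forall_ne_pow hp.ne_zero hnd
  set S := {x : K | O.valuation t * O.valuation x ^ p < 1}
  have hS : ∀ a b, O.valuation a ≤ O.valuation b → b ∈ S → a ∈ S := fun a b hab hb =>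
    lt_of_le_of_lt (mul_le_mul_right (pow_le_pow_left' hab p) _) hb
  have ht0 : O.valuation t ≠ 0 := by simpa [zero_pow hp.ne_zero] using htp 0
  have htinv : t⁻¹ ∉ S := by
    simp only [S, Set.mem_ofPred_eq, map_inv₀, not_lt]
    calc 1 = O.valuation t * (O.valuation t)⁻¹ := (mul_inv_cancel₀ ht0).symm
      _ ≤ O.valuation t * (O.valuation t)⁻¹ ^ p := by
        gcongr
        exact le_self_pow ((one_le_inv₀ (zero_lt_iff.mpr ht0)).mpr ht1.le) hp.ne_zero
  have hAS : {x : K | ∃ y, y ^ p - y = t * x ^ p} = S :=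
    Set.ext (O.exists_pow_sub_self_eq_mul_pow_iff hp.two_le htp)
  refine ⟨t, ValuationSubring.mulStabilizer hS, ValuationSubring.le_mulStabilizer hS,
    ValuationSubring.mulStabilizer_ne_top hS (by simpa [S] using ht1) one_ne_zero htinv,
    O.henselianLocalRing_of_le (ValuationSubring.le_mulStabilizer hS), ?_⟩
  have hdef := (definable₁_setOf_exists_pow_sub_self_eq_mul_pow p t).setOf_forall_mul_mem
  rw [hAS] at hdef
  exact hdef

/-- Proposition: henselian valuations with non-divisible value group have
nontrivial coarsenings definable with one parameter.
Let `K` be a field and `O` a nontrivial henselian valuation subring whose value group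
`K^×/O^×` is not divisible, i.e. not `p`-divisible for some prime `p`. Then there are
`t ∈ K` and a nontrivial (henselian) coarsening `O'` of `O` which is `{t}`-definable. -/
theorem exists_oneParamDefinable_coarsening_of_not_divisible
    (O : ValuationSubring K) (hO : O ≠ ⊤) (hhens : HenselianLocalRing O)
    (hndiv : ∃ p : ℕ, p.Prime ∧ ¬ ValueGroupPDivisible O p) :
    ∃ (t : K) (O' : ValuationSubring K), O ≤ O' ∧ O' ≠ ⊤ ∧ HenselianLocalRing O' ∧
      ({t} : Set K).Definable₁ Language.ring {x : K | x ∈ O'} :=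
  exists_oneParamDefinable_coarsening_of_not_divisible_general O hhens hndiv
end
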